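/- arXiv:math/0007029 — 4 statements merged into one kernel-verified Lean document; each statement's English description precedes it below -/
import Mathlib

section
/- If (Λ, d) is a k-graph and f : ℕ^ℓ → ℕ^k is a monoid morphism, then the pullback f*(Λ) = {(λ, n) : λ ∈ Λ, n ∈ ℕ^ℓ, d(λ) = f(n)}, with degree map d(λ, n) = n, source s(λ, n) = s(λ) and range r(λ, n) = r(λ), is an ℓ-graph. -/
open CategoryTheory

universe v u

/-- A `k`-graph structure: a degree functor `d : Λ → ℕ^k` satisfying the unique
factorisation property.  Here a morphism `f : a ⟶ b` has range `r f = a` and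
source `s f = b`, so that composition `f ≫ g` corresponds to the paper's `λμ`. -/
class KGraph (k : ℕ) (Λ : Type u) [Category.{v} Λ] where
  d : ∀ {a b : Λ}, (a ⟶ b) → (Fin k → ℕ)
  d_id : ∀ a : Λ, d (𝟙 a) = 0
  d_comp : ∀ {a b c : Λ} (f : a ⟶ b) (g : b ⟶ c), d (f ≫ g) = d f + d g
  factor : ∀ {a b : Λ} (f : a ⟶ b) (m n : Fin k → ℕ), d f = m + n →
    ∃! t : Σ c : Λ, (a ⟶ c) × (c ⟶ b),
      d t.2.1 = m ∧ d t.2.2 = n ∧ t.2.1 ≫ t.2.2 = f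

/-- `IsDegree k Λ d` says that the degree map `d` makes the category `Λ` into a
`k`-graph: `d` is a functor into `ℕ^k` satisfying the unique factorisation property. -/
def IsDegree (k : ℕ) (Λ : Type u) [Category.{v} Λ]
    (d : ∀ {a b : Λ}, (a ⟶ b) → (Fin k → ℕ)) : Prop :=
  (∀ a : Λ, d (𝟙 a) = 0) ∧
  (∀ {a b c : Λ} (f : a ⟶ b) (g : b ⟶ c), d (f ≫ g) = d f + d g) ∧
  (∀ {a b : Λ} (f : a ⟶ b) (m n : Fin k → ℕ), d f = m + n →
    ∃! t : Σ c : Λ, (a ⟶ c) × (c ⟶ b),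
      d t.2.1 = m ∧ d t.2.2 = n ∧ t.2.1 ≫ t.2.2 = f)

variable {k l : ℕ} {Λ : Type u} [Category.{v} Λ] [KGraph k Λ]

/-- Objects of the pullback `f*(Λ)`: the same as the objects of `Λ`. -/
structure PBObj (k l : ℕ) (Λ : Type u) [Category.{v} Λ] [KGraph k Λ]
    (f : (Fin l → ℕ) →+ (Fin k → ℕ)) where
  obj : Λ

/-- Morphisms of the pullback `f*(Λ)`: pairs `(λ, n)` with `d λ = f n`. -/
@[ext] structure PBHom (f : (Fin l → ℕ) →+ (Fin k → ℕ)) (a b : Λ) where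
  hom : a ⟶ b
  deg : Fin l → ℕ
  compat : KGraph.d (k := k) hom = f deg

instance PBcat (f : (Fin l → ℕ) →+ (Fin k → ℕ)) : Category (PBObj k l Λ f) where
  Hom a b := PBHom f a.obj b.obj
  id a := ⟨𝟙 a.obj, 0, by simp [KGraph.d_id]⟩
  comp g h := ⟨g.hom ≫ h.hom, g.deg + h.deg, by
    rw [KGraph.d_comp, g.compat, h.compat, map_add]⟩
  id_comp g := by apply PBHom.ext <;> simp
  comp_id g := by apply PBHom.ext <;> simp
  assoc g h i := by apply PBHom.ext <;> simp [add_assoc]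

/-! Since `f` is additive, a morphism `(λ, m + n)` of `f*(Λ)` has `d λ = f m + f n`, and its
factorisations of degrees `(m, n)` are exactly the factorisations `λ = μν` in `Λ` with
`d μ = f m`, `d ν = f n`, decorated by `m` and `n`; so both existence and uniqueness are
inherited from `Λ`. -/

namespace PBHom

variable {f : (Fin l → ℕ) →+ (Fin k → ℕ)} {a b : PBObj k l Λ f}

def baseFactorisation (t : Σ c : PBObj k l Λ f, (a ⟶ c) × (c ⟶ b)) :
    Σ c : Λ, (a.obj ⟶ c) × (c ⟶ b.obj) :=
  ⟨t.1.obj, t.2.1.hom, t.2.2.hom⟩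

lemma factorisation_ext {t t' : Σ c : PBObj k l Λ f, (a ⟶ c) × (c ⟶ b)}
    (h : baseFactorisation t = baseFactorisation t') (h₁ : t.2.1.deg = t'.2.1.deg)
    (h₂ : t.2.2.deg = t'.2.2.deg) : t = t' := by
  obtain ⟨⟨c⟩, p, q⟩ := t
  obtain ⟨⟨c'⟩, p', q'⟩ := t'
  obtain ⟨rfl, h⟩ := Sigma.mk.inj_iff.mp h
  obtain ⟨hp, hq⟩ := Prod.ext_iff.mp (eq_of_heq h)
  have : p = p' := PBHom.ext hp h₁
  have : q = q' := PBHom.ext hq h₂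
  subst_vars
  rfl

lemma d_hom_of_deg_eq_add {g : a ⟶ b} {m n : Fin l → ℕ} (hmn : g.deg = m + n) :
    KGraph.d g.hom = f m + f n := by
  rw [g.compat, hmn, map_add]

lemma factorisation_base_spec {g : a ⟶ b} {m n : Fin l → ℕ}
    {t : Σ c : PBObj k l Λ f, (a ⟶ c) × (c ⟶ b)}
    (ht : t.2.1.deg = m ∧ t.2.2.deg = n ∧ t.2.1 ≫ t.2.2 = g) :
    KGraph.d t.2.1.hom = f m ∧ KGraph.d t.2.2.hom = f n ∧ t.2.1.hom ≫ t.2.2.hom = g.hom := by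
  obtain ⟨rfl, rfl, rfl⟩ := ht
  exact ⟨t.2.1.compat, t.2.2.compat, rfl⟩

lemma exists_factorisation (g : a ⟶ b) {m n : Fin l → ℕ} (hmn : g.deg = m + n) :
    ∃ t : Σ c : PBObj k l Λ f, (a ⟶ c) × (c ⟶ b),
      t.2.1.deg = m ∧ t.2.2.deg = n ∧ t.2.1 ≫ t.2.2 = g := by
  obtain ⟨⟨c, p, q⟩, ⟨hp, hq, hpq⟩, -⟩ :=
    KGraph.factor g.hom (f m) (f n) (d_hom_of_deg_eq_add hmn)
  exact ⟨⟨⟨c⟩, ⟨p, m, hp⟩, ⟨q, n, hq⟩⟩, rfl, rfl, PBHom.ext hpq hmn.symm⟩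

lemma factorisation_unique (g : a ⟶ b) {m n : Fin l → ℕ} (hmn : g.deg = m + n)
    {t t' : Σ c : PBObj k l Λ f, (a ⟶ c) × (c ⟶ b)}
    (ht : t.2.1.deg = m ∧ t.2.2.deg = n ∧ t.2.1 ≫ t.2.2 = g)
    (ht' : t'.2.1.deg = m ∧ t'.2.2.deg = n ∧ t'.2.1 ≫ t'.2.2 = g) : t = t' := by
  refine factorisation_ext ?_ (ht.1.trans ht'.1.symm) (ht.2.1.trans ht'.2.1.symm)
  exact (KGraph.factor g.hom _ _ (d_hom_of_deg_eq_add hmn)).unique (factorisation_base_spec ht)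
    (factorisation_base_spec ht')

end PBHom

/-- The pullback `f*(Λ) = {(λ,n) : d λ = f n}` of a `k`-graph `Λ` along a monoid
morphism `f : ℕ^ℓ → ℕ^k`, with degree map `d(λ,n) = n`, is an `ℓ`-graph. -/
theorem pullback_isKGraph (k l : ℕ) (Λ : Type u) [Category.{v} Λ] [KGraph k Λ]
    (f : (Fin l → ℕ) →+ (Fin k → ℕ)) :
    IsDegree l (PBObj k l Λ f) (fun {_ _} g => PBHom.deg g) := by
  refine ⟨fun _ => rfl, fun _ _ => rfl, fun g m n hmn => ?_⟩
  obtain ⟨t, ht⟩ := PBHom.exists_factorisation g hmn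
  exact ⟨t, ht, fun t' ht' => PBHom.factorisation_unique g hmn ht' ht⟩
end

section
/- Let Λ be a k-graph, let {n_j : j ≥ 0} be an increasing cofinal sequence in ℕ^k with n_0 = 0, and let {λ_j : j ≥ 1} be a sequence in Λ with s(λ_j) = r(λ_{j+1}) and d(λ_j) = n_j − n_{j-1}. Then there is a unique infinite path x ∈ Λ^∞ such that x(n_{j-1}, n_j) = λ_j for all j ≥ 1. -/
/-!
Unique factorisation makes every morphism of a `k`-graph left-cancellable and makes an initial
segment of a morphism determined by its degree. So for each `m` the composites `λ₁ ⋯ λⱼ` with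
`m ≤ nⱼ` all have the same initial segment of degree `m`; taking it as `x(0, m)` gives a compatible
family, and `x(m, p)` is the unique morphism with `x(0, m) x(m, p) = x(0, p)`. Conversely an
infinite path `x` with `x(nⱼ₋₁, nⱼ) = λⱼ` has `x(0, nⱼ) = λ₁ ⋯ λⱼ`, so each `x(0, m)`, and hence
`x`, is forced.
-/

open CategoryTheory

universe v u

variable (k : ℕ) (Λ : Type u) [Category.{v} Λ] [KGraph k Λ]

/-- An infinite path in a `k`-graph `Λ`: a degree-preserving functor from
`Ω_k = {(m,n) ∈ ℕ^k × ℕ^k : m ≤ n}` to `Λ`.  `vert m` is the image `x(m)` of the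
object `m`, and `edge m n h` is the image `x(m,n)` of the morphism `(m,n)`. -/
structure InfPath where
  vert : (Fin k → ℕ) → Λ
  edge : ∀ m n : Fin k → ℕ, m ≤ n → (vert m ⟶ vert n)
  edge_self : ∀ m, edge m m le_rfl = 𝟙 (vert m)
  edge_comp : ∀ m n p (h₁ : m ≤ n) (h₂ : n ≤ p),
    edge m n h₁ ≫ edge n p h₂ = edge m p (h₁.trans h₂)
  deg : ∀ m n (h : m ≤ n), KGraph.d (k := k) (edge m n h) = n - m

variable {k Λ}

/-- The shift map `σ^p` on infinite paths: `σ^p(x)(m,n) = x(m+p, n+p)`. -/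
def InfPath.shift (x : InfPath k Λ) (p : Fin k → ℕ) : InfPath k Λ where
  vert m := x.vert (m + p)
  edge m n h := x.edge (m + p) (n + p) (add_le_add h (le_refl p))
  edge_self m := x.edge_self (m + p)
  edge_comp m n q h₁ h₂ := x.edge_comp _ _ _ _ _
  deg m n h := by
    rw [x.deg]
    funext i
    simp [Nat.add_sub_add_right]

namespace KGraph

theorem factor_eq {a b c c' : Λ} {f : a ⟶ b} {g : a ⟶ c} {h : c ⟶ b} {g' : a ⟶ c'}
    {h' : c' ⟶ b} (hf : g ≫ h = f) (hf' : g' ≫ h' = f) (hd : d (k := k) g = d g') :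
    (⟨c, g, h⟩ : Σ e : Λ, (a ⟶ e) × (e ⟶ b)) = ⟨c', g', h'⟩ := by
  have hdf : d (k := k) f = d g + d h := by rw [← hf]; exact d_comp g h
  have hd' : d (k := k) h' = d h := by
    apply add_left_cancel (a := d g)
    rw [← hdf, hd, ← d_comp, hf']
  exact (factor f _ _ hdf).unique ⟨rfl, rfl, hf⟩ ⟨hd.symm, hd', hf'⟩

theorem cancel_left (k : ℕ) [KGraph k Λ] {a b c : Λ} (f : a ⟶ b) {g g' : b ⟶ c}
    (h : f ≫ g = f ≫ g') : g = g' := by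
  simpa using factor_eq (k := k) rfl h.symm rfl

theorem sigma_eq_of_comp_eq {a b c c' : Λ} {g : a ⟶ c} {h : c ⟶ b} {g' : a ⟶ c'}
    {h' : c' ⟶ b} (hf : g ≫ h = g' ≫ h') (hd : d (k := k) g = d g') :
    (⟨c, g⟩ : Σ e : Λ, a ⟶ e) = ⟨c', g'⟩ :=
  congrArg (fun t : Σ e : Λ, (a ⟶ e) × (e ⟶ b) => (⟨t.1, t.2.1⟩ : Σ e : Λ, a ⟶ e))
    (factor_eq hf rfl hd)

theorem heq_of_comp_heq {a a' b b' c c' : Λ} {g : a ⟶ c} {h : c ⟶ b} {g' : a' ⟶ c'}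
    {h' : c' ⟶ b'} (ha : a = a') (hb : b = b') (hgh : g ≫ h ≍ g' ≫ h')
    (hd : d (k := k) g = d g') : c = c' ∧ g ≍ g' := by
  subst ha hb
  obtain ⟨rfl, hg⟩ := Sigma.mk.inj_iff.mp (sigma_eq_of_comp_eq (eq_of_heq hgh) hd)
  exact ⟨rfl, hg⟩

theorem heq_of_comp_eq_of_sigma_eq (k : ℕ) [KGraph k Λ] {a c c' : Λ} {s t : Σ e : Λ, a ⟶ e}
    {e : s.1 ⟶ t.1} (he : s.2 ≫ e = t.2) {f : a ⟶ c} {g : c ⟶ c'} (hs : s = ⟨c, f⟩)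
    (ht : t = ⟨c', f ≫ g⟩) : e ≍ g := by
  subst hs ht
  exact heq_of_eq (cancel_left k f he)

end KGraph

namespace InfPath

open KGraph

theorem ext_of_heq_edge_zero {x y : InfPath k Λ} (hv : ∀ m, x.vert m = y.vert m)
    (he : ∀ m, x.edge 0 m zero_le ≍ y.edge 0 m zero_le) : x = y := by
  obtain ⟨xv, xe, _, x_comp, _⟩ := x
  obtain ⟨yv, ye, _, y_comp, _⟩ := y
  obtain rfl : xv = yv := funext hv
  have he' : ∀ m, xe 0 m zero_le = ye 0 m zero_le := fun m => eq_of_heq (he m)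
  obtain rfl : xe = ye := by
    funext m p hmp
    apply cancel_left k (xe 0 m zero_le)
    rw [x_comp, he', he', y_comp]
  rfl

theorem eq_of_cofinal (n : ℕ → Fin k → ℕ) (h0 : n 0 = 0) (hmono : Monotone n)
    (hcof : ∀ m : Fin k → ℕ, ∃ j, m ≤ n j) {x y : InfPath k Λ}
    (hv : ∀ j, x.vert (n j) = y.vert (n j))
    (he : ∀ j, x.edge (n j) (n (j + 1)) (hmono j.le_succ) ≍
      y.edge (n j) (n (j + 1)) (hmono j.le_succ)) : x = y := by
  have hv0 : x.vert 0 = y.vert 0 := h0 ▸ hv 0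
  have hseg : ∀ j, x.edge 0 (n j) zero_le ≍ y.edge 0 (n j) zero_le := by
    intro j
    induction j with
    | zero =>
      rw [h0, x.edge_self, y.edge_self]
      exact hv0 ▸ HEq.rfl
    | succ j ih =>
      rw [← x.edge_comp 0 (n j) _ zero_le (hmono j.le_succ),
        ← y.edge_comp 0 (n j) _ zero_le (hmono j.le_succ)]
      exact heq_comp hv0 (hv j) (hv (j + 1)) ih (he j)
  have hprefix : ∀ m, x.vert m = y.vert m ∧ x.edge 0 m zero_le ≍ y.edge 0 m zero_le := by
    intro m
    obtain ⟨j, hj⟩ := hcof m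
    refine heq_of_comp_heq (h := x.edge m (n j) hj) (h' := y.edge m (n j) hj) hv0 (hv j) ?_
      (by rw [x.deg, y.deg])
    rw [x.edge_comp, y.edge_comp]
    exact hseg j
  exact ext_of_heq_edge_zero (fun m => (hprefix m).1) (fun m => (hprefix m).2)

section OfSegments

variable {a : Λ} (seg : (Fin k → ℕ) → Σ c : Λ, a ⟶ c)
  (d_seg : ∀ m, d (k := k) (seg m).2 = m)
  (seg_le : ∀ m p, m ≤ p → ∃ e : (seg m).1 ⟶ (seg p).1, (seg m).2 ≫ e = (seg p).2)

/-- `seg m` becomes `x(0, m)`, and `x(m, p)` is the morphism `e` with `x(0, m) e = x(0, p)`,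
unique by left cancellation. -/
noncomputable def ofSegments : InfPath k Λ where
  vert m := (seg m).1
  edge m p h := (seg_le m p h).choose
  edge_self m := (cancel_left k (seg m).2 <| by
    rw [(seg_le m m le_rfl).choose_spec, Category.comp_id]).symm
  edge_comp m p q h₁ h₂ := cancel_left k (seg m).2 <| by
    rw [← Category.assoc, (seg_le m p h₁).choose_spec, (seg_le p q h₂).choose_spec,
      (seg_le m q (h₁.trans h₂)).choose_spec]
  deg m p h := by
    have hdeg := congrArg (d (k := k)) (seg_le m p h).choose_spec
    rw [d_comp, d_seg, d_seg] at hdeg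
    exact eq_tsub_of_add_eq ((add_comm _ _).trans hdeg)

theorem ofSegments_edge_heq {m p : Fin k → ℕ} (h : m ≤ p) {c c' : Λ} {f : a ⟶ c} {g : c ⟶ c'}
    (hm : seg m = ⟨c, f⟩) (hp : seg p = ⟨c', f ≫ g⟩) :
    (ofSegments seg d_seg seg_le).edge m p h ≍ g :=
  heq_of_comp_eq_of_sigma_eq k (seg_le m p h).choose_spec hm hp

end OfSegments

end InfPath

namespace KGraph

variable {vrt : ℕ → Λ}

def compUpTo (lam : ∀ j, vrt j ⟶ vrt (j + 1)) : ∀ j, vrt 0 ⟶ vrt j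
  | 0 => 𝟙 _
  | j + 1 => compUpTo lam j ≫ lam j

def IsInitialSegment (lam : ∀ j, vrt j ⟶ vrt (j + 1)) (s : Σ c : Λ, vrt 0 ⟶ c) : Prop :=
  ∃ j, ∃ t : s.1 ⟶ vrt j, s.2 ≫ t = compUpTo lam j

variable {lam : ∀ j, vrt j ⟶ vrt (j + 1)}

theorem d_compUpTo {n : ℕ → Fin k → ℕ} (h0 : n 0 = 0) (hmono : Monotone n)
    (hs : ∀ j, d (k := k) (lam j) = n (j + 1) - n j) : ∀ j, d (k := k) (compUpTo lam j) = n j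
  | 0 => by rw [compUpTo, d_id, h0]
  | j + 1 => by
    rw [compUpTo, d_comp, d_compUpTo h0 hmono hs j, hs j,
      add_tsub_cancel_of_le (hmono j.le_succ)]

theorem exists_comp_eq_compUpTo {j l : ℕ} (h : j ≤ l) :
    ∃ g : vrt j ⟶ vrt l, compUpTo lam j ≫ g = compUpTo lam l := by
  induction l, h using Nat.le_induction with
  | base => exact ⟨𝟙 _, Category.comp_id _⟩
  | succ l _ ih =>
    obtain ⟨g, hg⟩ := ih
    exact ⟨g ≫ lam l, by rw [compUpTo, ← hg, Category.assoc]⟩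

theorem isInitialSegment_compUpTo (j : ℕ) : IsInitialSegment lam ⟨vrt j, compUpTo lam j⟩ :=
  ⟨j, 𝟙 _, Category.comp_id _⟩

theorem IsInitialSegment.of_comp {c c' : Λ} {g : vrt 0 ⟶ c} {h : c ⟶ c'}
    (hs : IsInitialSegment lam ⟨c', g ≫ h⟩) : IsInitialSegment lam ⟨c, g⟩ := by
  obtain ⟨j, t, ht⟩ := hs
  exact ⟨j, h ≫ t, by rw [← ht, Category.assoc]⟩

theorem IsInitialSegment.eq {s s' : Σ c : Λ, vrt 0 ⟶ c} (hs : IsInitialSegment lam s)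
    (hs' : IsInitialSegment lam s') (hd : d (k := k) s.2 = d s'.2) : s = s' := by
  obtain ⟨j, t, ht⟩ := hs
  obtain ⟨j', t', ht'⟩ := hs'
  obtain ⟨g, hg⟩ := exists_comp_eq_compUpTo (lam := lam) (le_max_left j j')
  obtain ⟨g', hg'⟩ := exists_comp_eq_compUpTo (lam := lam) (le_max_right j j')
  refine sigma_eq_of_comp_eq (h := t ≫ g) (h' := t' ≫ g') ?_ hd
  rw [← Category.assoc, ← Category.assoc, ht, ht', hg, hg']

theorem exists_isInitialSegment {n : ℕ → Fin k → ℕ} (h0 : n 0 = 0) (hmono : Monotone n)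
    (hcof : ∀ m : Fin k → ℕ, ∃ j, m ≤ n j) (hs : ∀ j, d (k := k) (lam j) = n (j + 1) - n j)
    (m : Fin k → ℕ) : ∃ s, d (k := k) s.2 = m ∧ IsInitialSegment lam s := by
  obtain ⟨j, hj⟩ := hcof m
  have hdeg : d (k := k) (compUpTo lam j) = m + (n j - m) := by
    rw [d_compUpTo h0 hmono hs, add_tsub_cancel_of_le hj]
  obtain ⟨⟨c, g, h⟩, hg, -, hgh⟩ := (factor _ _ _ hdeg).exists
  exact ⟨⟨c, g⟩, hg, j, h, hgh⟩

theorem IsInitialSegment.exists_comp_eq {s t : Σ c : Λ, vrt 0 ⟶ c} (hs : IsInitialSegment lam s)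
    (ht : IsInitialSegment lam t) (hle : d (k := k) s.2 ≤ d t.2) :
    ∃ e : s.1 ⟶ t.1, s.2 ≫ e = t.2 := by
  obtain ⟨⟨c, g, h⟩, hg, -, hgh⟩ := (factor t.2 _ _ (add_tsub_cancel_of_le hle).symm).exists
  have hgh_seg : IsInitialSegment lam ⟨t.1, g ≫ h⟩ := by rwa [hgh]
  obtain rfl : s = ⟨c, g⟩ := hs.eq hgh_seg.of_comp hg.symm
  exact ⟨h, hgh⟩

end KGraph

/-- Given an increasing cofinal sequence `n_j` in `ℕ^k` with `n 0 = 0` and a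
composable sequence of morphisms `λ_j : v (j-1) ⟶ v j` with `d λ_j = n_j - n_{j-1}`,
there is a unique infinite path `x` with `x(n_{j-1}, n_j) = λ_j` for all `j`. -/
theorem infPath_from_cofinal_sequence
    (k : ℕ) (Λ : Type u) [Category.{v} Λ] [KGraph k Λ]
    (n : ℕ → (Fin k → ℕ)) (h0 : n 0 = 0) (hmono : Monotone n)
    (hcof : ∀ m : Fin k → ℕ, ∃ j, m ≤ n j)
    (vrt : ℕ → Λ) (lam : ∀ j : ℕ, vrt j ⟶ vrt (j + 1))
    (hs : ∀ j, KGraph.d (k := k) (lam j) = n (j + 1) - n j) :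
    ∃! x : InfPath k Λ, ∀ j : ℕ, x.vert (n j) = vrt j ∧
      HEq (x.edge (n j) (n (j + 1)) (hmono (Nat.le_succ j))) (lam j) := by
  choose seg d_seg seg_initial using KGraph.exists_isInitialSegment h0 hmono hcof hs
  have seg_n : ∀ j, seg (n j) = ⟨vrt j, KGraph.compUpTo lam j⟩ := fun j =>
    (seg_initial _).eq (KGraph.isInitialSegment_compUpTo j)
      (by rw [d_seg, KGraph.d_compUpTo h0 hmono hs])
  let x := InfPath.ofSegments seg d_seg fun m p h =>
    (seg_initial m).exists_comp_eq (seg_initial p) (by rwa [d_seg, d_seg])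
  refine existsUnique_of_exists_of_unique ⟨x, fun j => ⟨congrArg Sigma.fst (seg_n j),
    InfPath.ofSegments_edge_heq _ _ _ _ (seg_n j) (seg_n (j + 1))⟩⟩ ?_
  intro y₁ y₂ hy₁ hy₂
  exact InfPath.eq_of_cofinal n h0 hmono hcof (fun j => (hy₁ j).1.trans (hy₂ j).1.symm)
    fun j => (hy₁ j).2.trans (hy₂ j).2.symm
end

section
/- Let Λ be a k-graph on which a countable group G acts freely (i.e., freely on Λ^0), and let q : Λ → Λ/G be the quotient map. Then there exists a functor c : Λ/G → G and a degree-preserving isomorphism of k-graphs Λ ≅ G ×_c (Λ/G) which is equivariant for the G-actions, where G acts on G ×_c (Λ/G) by g·(h, λ) = (gh, λ). -/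
open CategoryTheory

universe v u

variable {k : ℕ} {Λ : Type u} [Category.{v} Λ] [KGraph k Λ]
variable {G : Type u} [Group G]

/-- Objects of the skew product `G ×_c Λ`: pairs `(g, v)` with `g ∈ G`, `v ∈ Λ^0`. -/
structure SkewObj (G : Type u) [Group G] (Λ : Type u) [Category.{v} Λ] where
  grp : G
  pt : Λ

/-- The skew product category `G ×_c Λ` associated to a functor `c : Λ → G`:
a morphism `(g, λ)` has range `(g, r λ)` and source `(g ⬝ c(λ), s λ)`, and
`(g, λ)(g ⬝ c(λ), μ) = (g, λμ)`. -/
def SkewCat (c : ∀ {a b : Λ}, (a ⟶ b) → G)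
    (hc_id : ∀ a : Λ, c (𝟙 a) = 1)
    (hc_comp : ∀ {a b e : Λ} (f : a ⟶ b) (g : b ⟶ e), c (f ≫ g) = c f * c g) :
    Category (SkewObj G Λ) where
  Hom A B := {f : A.pt ⟶ B.pt // B.grp = A.grp * c f}
  id A := ⟨𝟙 A.pt, by rw [hc_id, mul_one]⟩
  comp {A B C} f g := ⟨f.1 ≫ g.1, by rw [hc_comp, ← mul_assoc, ← f.2, ← g.2]⟩
  id_comp f := by apply Subtype.ext; simp
  comp_id f := by apply Subtype.ext; simp
  assoc f g h := by apply Subtype.ext; simp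

/-! Fix a section `σ` of the orbit map `q : Λ → Λ/G`. Freeness gives every vertex `a` a unique
coordinate `g_a ∈ G` with `a = g_a • σ (q a)`, and `a ↦ (g_a, q a)` is an equivariant bijection
`Λ^0 ≃ G × (Λ/G)^0`. For a morphism `f : a ⟶ b` the difference `g_a⁻¹ g_b` is invariant under
the action, so it descends to a function `c` on `Λ/G`, which is a functor because lifts of
composable morphisms can be chosen composable. With this `c`, `q` itself is the isomorphism onto
`G ×_c (Λ/G)`: it is injective on each hom-set by freeness, and a morphism `q a ⟶ b'` of `Λ/G`
lifts to a morphism `a ⟶ b` whose endpoint `b` in the fibre over `b'` is pinned down by `c`. -/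

section OrbitCoordinates

variable {X Y : Type*} [MulAction G X] {q : X → Y}
  (hq : ∀ x y, q x = q y ↔ ∃ g : G, g • x = y) {σ : Y → X} (hσ : ∀ y, q (σ y) = y)
  (hfree : ∀ (g : G) (x : X), g • x = x → g = 1)

include hq in
theorem apply_smul_of_fibres_eq_orbits (g : G) (x : X) : q (g • x) = q x :=
  ((hq x (g • x)).mpr ⟨g, rfl⟩).symm

noncomputable def orbitCoord (x : X) : G :=
  ((hq (σ (q x)) x).mp (hσ (q x))).choose

theorem orbitCoord_smul_section (x : X) : orbitCoord hq hσ x • σ (q x) = x :=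
  ((hq (σ (q x)) x).mp (hσ (q x))).choose_spec

include hfree in
theorem eq_of_smul_eq_smul_of_free {g h : G} {x : X} (hgh : g • x = h • x) : g = h := by
  have : (h⁻¹ * g) • x = x := by rw [mul_smul, hgh, inv_smul_smul]
  exact (inv_mul_eq_one.mp (hfree _ _ this)).symm

include hfree in
theorem eq_orbitCoord {g : G} {x : X} (h : g • σ (q x) = x) : g = orbitCoord hq hσ x :=
  eq_of_smul_eq_smul_of_free hfree (h.trans (orbitCoord_smul_section hq hσ x).symm)

include hfree in
theorem orbitCoord_section (y : Y) : orbitCoord hq hσ (σ y) = 1 :=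
  (eq_orbitCoord hq hσ hfree (by rw [hσ, one_smul])).symm

include hfree in
theorem orbitCoord_smul (g : G) (x : X) :
    orbitCoord hq hσ (g • x) = g * orbitCoord hq hσ x := by
  refine (eq_orbitCoord hq hσ hfree ?_).symm
  rw [apply_smul_of_fibres_eq_orbits hq, mul_smul, orbitCoord_smul_section]

include hfree in
theorem orbitCoord_inv_mul_smul (g : G) (x y : X) :
    (orbitCoord hq hσ (g • x))⁻¹ * orbitCoord hq hσ (g • y) =
      (orbitCoord hq hσ x)⁻¹ * orbitCoord hq hσ y := by
  rw [orbitCoord_smul hq hσ hfree, orbitCoord_smul hq hσ hfree]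
  group

noncomputable def equivProdOfFree : X ≃ G × Y where
  toFun x := (orbitCoord hq hσ x, q x)
  invFun p := p.1 • σ p.2
  left_inv := orbitCoord_smul_section hq hσ
  right_inv := by
    rintro ⟨g, y⟩
    simp only [orbitCoord_smul hq hσ hfree, orbitCoord_section hq hσ hfree,
      mul_one, apply_smul_of_fibres_eq_orbits hq, hσ]

end OrbitCoordinates

def skewObjEquivProd (Λ' : Type u) [Category.{v} Λ'] : SkewObj G Λ' ≃ G × Λ' where
  toFun A := (A.grp, A.pt)
  invFun p := ⟨p.1, p.2⟩
  left_inv _ := rfl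
  right_inv _ := rfl

section QuotientMorphisms

variable {Λ' : Type*} [Category Λ'] [MulAction G Λ] {qo : Λ → Λ'}
  (qm : ∀ {a b : Λ}, (a ⟶ b) → (qo a ⟶ qo b))
  (amor : ∀ (g : G) {a b : Λ}, (a ⟶ b) → (g • a ⟶ g • b))
  (qm_surj : ∀ {a' b' : Λ'} (f' : a' ⟶ b'), ∃ (a b : Λ) (f : a ⟶ b)
    (ha : qo a = a') (hb : qo b = b'), f' = eqToHom ha.symm ≫ qm f ≫ eqToHom hb)
  (qo_orbit : ∀ a b : Λ, qo a = qo b ↔ ∃ g : G, g • a = b)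
  (qm_orbit : ∀ {a b a₂ b₂ : Λ} (f : a ⟶ b) (f₂ : a₂ ⟶ b₂),
    (qo a = qo a₂ ∧ qo b = qo b₂ ∧ qm f ≍ qm f₂) ↔ ∃ g : G, g • a = a₂ ∧ g • b = b₂ ∧ amor g f ≍ f₂)
  (hfree : ∀ (g : G) (a : Λ), g • a = a → g = 1)

include qm_orbit in
theorem qm_amor_heq (g : G) {a b : Λ} (f : a ⟶ b) : qm (amor g f) ≍ qm f :=
  ((qm_orbit f (amor g f)).mpr ⟨g, rfl, rfl, .rfl⟩).2.2.symm

include qm_orbit hfree in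
theorem qm_injective_of_free (amor_one : ∀ {a b : Λ} (f : a ⟶ b), amor 1 f ≍ f) {a b : Λ} :
    Function.Injective (qm (a := a) (b := b)) := by
  intro f f₂ h
  obtain ⟨g, hga, -, hg⟩ := (qm_orbit f f₂).mp ⟨rfl, rfl, heq_of_eq h⟩
  obtain rfl := hfree g a hga
  exact eq_of_heq ((amor_one f).symm.trans hg)

include qm_surj qo_orbit qm_orbit in
theorem exists_lift_of_source {b : Λ} {e' : Λ'} (g' : qo b ⟶ e') :
    ∃ (e : Λ) (g : b ⟶ e) (he : qo e = e'), g' = qm g ≫ eqToHom he := by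
  obtain ⟨b₀, e₀, g₀, hb₀, he₀, rfl⟩ := qm_surj g'
  obtain ⟨h, rfl⟩ := (qo_orbit b₀ b).mp hb₀
  refine ⟨h • e₀, amor h g₀, (apply_smul_of_fibres_eq_orbits qo_orbit h e₀).trans he₀, ?_⟩
  refine eq_of_heq (((eqToHom_comp_heq _ _).trans (comp_eqToHom_heq _ _)).trans ?_)
  exact (qm_amor_heq qm amor qm_orbit h g₀).symm.trans (comp_eqToHom_heq _ _).symm

include qm_surj in
theorem exists_hom_descent {β : Sort*} (φ : ∀ {a b : Λ}, (a ⟶ b) → β)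
    (hφ : ∀ {a b a₂ b₂ : Λ} (f : a ⟶ b) (f₂ : a₂ ⟶ b₂),
      qo a = qo a₂ → qo b = qo b₂ → qm f ≍ qm f₂ → φ f = φ f₂) :
    ∃ ψ : ∀ a' b' : Λ', (a' ⟶ b') → β, ∀ {a b : Λ} (f : a ⟶ b), ψ _ _ (qm f) = φ f := by
  choose a b f ha hb hf using fun {a' b' : Λ'} (f' : a' ⟶ b') => qm_surj f'
  exact ⟨fun _ _ f' => φ (f f'), fun f₀ =>
    hφ _ f₀ (ha _) (hb _) ((conj_eqToHom_iff_heq' _ _ _ _).mp (hf (qm f₀))).symm⟩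

variable {σ : Λ' → Λ} (hσ : ∀ a', qo (σ a') = a')

include qm_surj qm_orbit hfree in
theorem exists_cocycle : ∃ c : ∀ a' b' : Λ', (a' ⟶ b') → G, ∀ {a b : Λ} (f : a ⟶ b),
    c _ _ (qm f) = (orbitCoord qo_orbit hσ a)⁻¹ * orbitCoord qo_orbit hσ b :=
  exists_hom_descent qm qm_surj _ fun f f₂ ha hb hf => by
    obtain ⟨g, rfl, rfl, -⟩ := (qm_orbit f f₂).mp ⟨ha, hb, hf⟩
    exact (orbitCoord_inv_mul_smul qo_orbit hσ hfree g _ _).symm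

variable (c : ∀ a' b' : Λ', (a' ⟶ b') → G) (hc : ∀ {a b : Λ} (f : a ⟶ b),
  c _ _ (qm f) = (orbitCoord qo_orbit hσ a)⁻¹ * orbitCoord qo_orbit hσ b)

include hc in
theorem cocycle_id (qm_id : ∀ a : Λ, qm (𝟙 a) = 𝟙 (qo a)) (a' : Λ') : c a' a' (𝟙 a') = 1 := by
  obtain ⟨a, rfl⟩ : ∃ a, qo a = a' := ⟨σ a', hσ a'⟩
  rw [← qm_id, hc, inv_mul_cancel]

include hc qm_surj qm_orbit in
theorem cocycle_comp
    (qm_comp : ∀ {a b e : Λ} (f : a ⟶ b) (g : b ⟶ e), qm (f ≫ g) = qm f ≫ qm g)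
    {a' b' e' : Λ'} (f' : a' ⟶ b') (g' : b' ⟶ e') :
    c a' e' (f' ≫ g') = c a' b' f' * c b' e' g' := by
  obtain ⟨a, rfl⟩ : ∃ a, qo a = a' := ⟨σ a', hσ a'⟩
  obtain ⟨b, f, rfl, rfl⟩ := exists_lift_of_source qm amor qm_surj qo_orbit qm_orbit f'
  obtain ⟨e, g, rfl, rfl⟩ := exists_lift_of_source qm amor qm_surj qo_orbit qm_orbit g'
  simp only [eqToHom_refl, Category.comp_id]
  rw [← qm_comp, hc, hc, hc]
  group

include hc qm_surj qm_orbit hfree in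
theorem exists_hom_of_cocycle {a b : Λ} (f' : qo a ⟶ qo b)
    (hf' : orbitCoord qo_orbit hσ b = orbitCoord qo_orbit hσ a * c _ _ f') :
    ∃ f : a ⟶ b, qm f = f' := by
  obtain ⟨e, f, he, rfl⟩ := exists_lift_of_source qm amor qm_surj qo_orbit qm_orbit f'
  have c_comp_eqToHom : ∀ {x y z : Λ'} (f : x ⟶ y) (h : y = z),
      c x z (f ≫ eqToHom h) = c x y f := by
    rintro x y _ f rfl
    rw [eqToHom_refl, Category.comp_id]
  rw [c_comp_eqToHom, hc, mul_inv_cancel_left] at hf'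
  obtain rfl : e = b := (equivProdOfFree qo_orbit hσ hfree).injective (Prod.ext hf'.symm he)
  exact ⟨f, by rw [eqToHom_refl, Category.comp_id]⟩

end QuotientMorphisms

theorem free_action_skew_product_general
    (k : ℕ) (Λ : Type u) [Category.{v} Λ] [KGraph k Λ]
    (G : Type u) [Group G]
    -- an action of `G` on `Λ` by degree-preserving automorphisms:
    (aobj : G → Λ → Λ)
    (amor : ∀ (g : G) {a b : Λ}, (a ⟶ b) → (aobj g a ⟶ aobj g b))
    (aobj_one : ∀ a, aobj 1 a = a)
    (aobj_mul : ∀ g h a, aobj (g * h) a = aobj g (aobj h a))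
    (amor_one : ∀ {a b : Λ} (f : a ⟶ b), HEq (amor 1 f) f)
    -- the action is free on the objects `Λ^0`:
    (hfree : ∀ (g : G) (a : Λ), aobj g a = a → g = 1)
    -- `q : Λ → Λ' = Λ/G` is the quotient k-graph morphism:
    (Λ' : Type u) [Category.{v} Λ'] [KGraph k Λ']
    (qo : Λ → Λ') (qm : ∀ {a b : Λ}, (a ⟶ b) → (qo a ⟶ qo b))
    (qm_id : ∀ a : Λ, qm (𝟙 a) = 𝟙 (qo a))
    (qm_comp : ∀ {a b e : Λ} (f : a ⟶ b) (g : b ⟶ e), qm (f ≫ g) = qm f ≫ qm g)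
    (qm_deg : ∀ {a b : Λ} (f : a ⟶ b), KGraph.d (k := k) (qm f) = KGraph.d (k := k) f)
    (qo_surj : Function.Surjective qo)
    (qm_surj : ∀ {a' b' : Λ'} (f' : a' ⟶ b'), ∃ (a b : Λ) (f : a ⟶ b)
      (ha : qo a = a') (hb : qo b = b'),
      f' = eqToHom ha.symm ≫ qm f ≫ eqToHom hb)
    (qo_orbit : ∀ a b : Λ, qo a = qo b ↔ ∃ g, aobj g a = b)
    (qm_orbit : ∀ {a b a₂ b₂ : Λ} (f : a ⟶ b) (f₂ : a₂ ⟶ b₂),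
      (qo a = qo a₂ ∧ qo b = qo b₂ ∧ HEq (qm f) (qm f₂)) ↔
        ∃ g, aobj g a = a₂ ∧ aobj g b = b₂ ∧ HEq (amor g f) f₂) :
    -- conclusion: a functor `c : Λ/G → G` and an equivariant isomorphism
    -- `Λ ≅ G ×_c (Λ/G)` of `k`-graphs
    ∃ (c : ∀ a' b' : Λ', (a' ⟶ b') → G),
      (∀ a' : Λ', c a' a' (𝟙 a') = 1) ∧
      (∀ {a' b' e' : Λ'} (f : a' ⟶ b') (g : b' ⟶ e'),
        c a' e' (f ≫ g) = c a' b' f * c b' e' g) ∧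
      ∃ (Fo : Λ → SkewObj G Λ')
        (Fm : ∀ a b : Λ, (a ⟶ b) →
          {f' : (Fo a).pt ⟶ (Fo b).pt // (Fo b).grp = (Fo a).grp * c _ _ f'}),
        Function.Bijective Fo ∧
        (∀ a b : Λ, Function.Bijective (Fm a b)) ∧
        (∀ a : Λ, (Fm a a (𝟙 a)).1 = 𝟙 (Fo a).pt) ∧
        (∀ {a b e : Λ} (f : a ⟶ b) (g : b ⟶ e),
          (Fm a e (f ≫ g)).1 = (Fm a b f).1 ≫ (Fm b e g).1) ∧
        (∀ {a b : Λ} (f : a ⟶ b),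
          KGraph.d (k := k) (Fm a b f).1 = KGraph.d (k := k) f) ∧
        (∀ (g : G) (a : Λ), Fo (aobj g a) = ⟨g * (Fo a).grp, (Fo a).pt⟩) ∧
        (∀ (g : G) {a b : Λ} (f : a ⟶ b),
          HEq (Fm _ _ (amor g f)).1 (Fm a b f).1) := by
  let : MulAction G Λ := { smul := aobj, one_smul := aobj_one, mul_smul := aobj_mul }
  choose σ hσ using qo_surj
  obtain ⟨c, hc⟩ := exists_cocycle qm amor qm_surj qo_orbit qm_orbit hfree hσ
  refine ⟨c, cocycle_id qm qo_orbit hσ c hc qm_id,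
    cocycle_comp qm amor qm_surj qo_orbit qm_orbit hσ c hc qm_comp,
    fun a => ⟨orbitCoord qo_orbit hσ a, qo a⟩,
    fun a b f => ⟨qm f, by rw [hc, mul_inv_cancel_left]⟩,
    ((equivProdOfFree qo_orbit hσ hfree).trans (skewObjEquivProd Λ').symm).bijective,
    fun a b => ⟨fun f f₂ h => qm_injective_of_free qm amor qm_orbit hfree amor_one
      (congrArg Subtype.val h), fun ⟨f', hf'⟩ =>
      (exists_hom_of_cocycle qm amor qm_surj qo_orbit qm_orbit hfree hσ c hc f' hf').imp
        fun _ hf => Subtype.ext hf⟩,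
    qm_id, qm_comp, qm_deg, fun g a => congrArg₂ SkewObj.mk
      (orbitCoord_smul qo_orbit hσ hfree g a) (apply_smul_of_fibres_eq_orbits qo_orbit g a),
    fun g _ _ f => qm_amor_heq qm amor qm_orbit g f⟩

/-- If a countable group `G` acts freely on a `k`-graph `Λ`, and `q : Λ → Λ/G` is
the quotient map onto the quotient `k`-graph `Λ' = Λ/G`, then there is a functor
`c : Λ/G → G` and an equivariant degree-preserving isomorphism
`Λ ≅ G ×_c (Λ/G)`, where `G` acts on the skew product by `g ⬝ (h, λ) = (gh, λ)`.
Here a morphism of the skew product `G ×_c Λ'` from `(g, a')` to `(g ⬝ c(f), b')`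
is encoded as an element of the subtype `{f : a' ⟶ b' // ⋯}` as in `SkewCat`. -/
theorem free_action_skew_product
    (k : ℕ) (Λ : Type u) [Category.{v} Λ] [KGraph k Λ]
    (G : Type u) [Group G] [Countable G]
    -- an action of `G` on `Λ` by degree-preserving automorphisms:
    (aobj : G → Λ → Λ)
    (amor : ∀ (g : G) {a b : Λ}, (a ⟶ b) → (aobj g a ⟶ aobj g b))
    (aobj_one : ∀ a, aobj 1 a = a)
    (aobj_mul : ∀ g h a, aobj (g * h) a = aobj g (aobj h a))
    (amor_one : ∀ {a b : Λ} (f : a ⟶ b), HEq (amor 1 f) f)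
    (amor_mul : ∀ (g h : G) {a b : Λ} (f : a ⟶ b),
      HEq (amor (g * h) f) (amor g (amor h f)))
    (amor_id : ∀ (g : G) (a : Λ), amor g (𝟙 a) = 𝟙 (aobj g a))
    (amor_comp : ∀ (g : G) {a b e : Λ} (f : a ⟶ b) (f' : b ⟶ e),
      amor g (f ≫ f') = amor g f ≫ amor g f')
    (amor_deg : ∀ (g : G) {a b : Λ} (f : a ⟶ b),
      KGraph.d (k := k) (amor g f) = KGraph.d (k := k) f)
    -- the action is free on the objects `Λ^0`:
    (hfree : ∀ (g : G) (a : Λ), aobj g a = a → g = 1)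
    -- `q : Λ → Λ' = Λ/G` is the quotient k-graph morphism:
    (Λ' : Type u) [Category.{v} Λ'] [KGraph k Λ']
    (qo : Λ → Λ') (qm : ∀ {a b : Λ}, (a ⟶ b) → (qo a ⟶ qo b))
    (qm_id : ∀ a : Λ, qm (𝟙 a) = 𝟙 (qo a))
    (qm_comp : ∀ {a b e : Λ} (f : a ⟶ b) (g : b ⟶ e), qm (f ≫ g) = qm f ≫ qm g)
    (qm_deg : ∀ {a b : Λ} (f : a ⟶ b), KGraph.d (k := k) (qm f) = KGraph.d (k := k) f)
    (qo_surj : Function.Surjective qo)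
    (qm_surj : ∀ {a' b' : Λ'} (f' : a' ⟶ b'), ∃ (a b : Λ) (f : a ⟶ b)
      (ha : qo a = a') (hb : qo b = b'),
      f' = eqToHom ha.symm ≫ qm f ≫ eqToHom hb)
    (qo_orbit : ∀ a b : Λ, qo a = qo b ↔ ∃ g, aobj g a = b)
    (qm_orbit : ∀ {a b a₂ b₂ : Λ} (f : a ⟶ b) (f₂ : a₂ ⟶ b₂),
      (qo a = qo a₂ ∧ qo b = qo b₂ ∧ HEq (qm f) (qm f₂)) ↔
        ∃ g, aobj g a = a₂ ∧ aobj g b = b₂ ∧ HEq (amor g f) f₂) :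
    -- conclusion: a functor `c : Λ/G → G` and an equivariant isomorphism
    -- `Λ ≅ G ×_c (Λ/G)` of `k`-graphs
    ∃ (c : ∀ a' b' : Λ', (a' ⟶ b') → G),
      (∀ a' : Λ', c a' a' (𝟙 a') = 1) ∧
      (∀ {a' b' e' : Λ'} (f : a' ⟶ b') (g : b' ⟶ e'),
        c a' e' (f ≫ g) = c a' b' f * c b' e' g) ∧
      ∃ (Fo : Λ → SkewObj G Λ')
        (Fm : ∀ a b : Λ, (a ⟶ b) →
          {f' : (Fo a).pt ⟶ (Fo b).pt // (Fo b).grp = (Fo a).grp * c _ _ f'}),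
        Function.Bijective Fo ∧
        (∀ a b : Λ, Function.Bijective (Fm a b)) ∧
        (∀ a : Λ, (Fm a a (𝟙 a)).1 = 𝟙 (Fo a).pt) ∧
        (∀ {a b e : Λ} (f : a ⟶ b) (g : b ⟶ e),
          (Fm a e (f ≫ g)).1 = (Fm a b f).1 ≫ (Fm b e g).1) ∧
        (∀ {a b : Λ} (f : a ⟶ b),
          KGraph.d (k := k) (Fm a b f).1 = KGraph.d (k := k) f) ∧
        (∀ (g : G) (a : Λ), Fo (aobj g a) = ⟨g * (Fo a).grp, (Fo a).pt⟩) ∧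
        (∀ (g : G) {a b : Λ} (f : a ⟶ b),
          HEq (Fm _ _ (amor g f)).1 (Fm a b f).1) :=
  free_action_skew_product_general k Λ G aobj amor aobj_one aobj_mul amor_one hfree Λ' qo qm qm_id
    qm_comp qm_deg qo_surj qm_surj qo_orbit qm_orbit
end

section
/- Let E be a row-finite directed graph with no sinks. Its path category E* satisfies the aperiodicity condition (every vertex receives an aperiodic infinite path) if and only if every loop (cycle) in E has an exit. -/
/-- A countable directed graph `E = (E⁰, E¹, r, s)`. -/
structure DirGraph where
  V : Type
  E : Type
  r : E → V
  s : E → V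

/-- An infinite path in `E`: a sequence of edges `x_0 x_1 x_2 ⋯` with
`r(x_{n+1}) = s(x_n)`, so that `x` is "received" at the vertex `r(x_0)`. -/
def DirGraph.IsInfPath (Γ : DirGraph) (x : ℕ → Γ.E) : Prop :=
  ∀ n, Γ.r (x (n + 1)) = Γ.s (x n)

/-- An infinite path `x` is aperiodic if `σ^m x = σ^n x` implies `m = n`,
where `σ` is the shift `(σ x)_j = x_{j+1}`. -/
def DirGraph.AperiodicPath (Γ : DirGraph) (x : ℕ → Γ.E) : Prop :=
  ∀ m n : ℕ, (fun j => x (j + m)) = (fun j => x (j + n)) → m = n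

/-- A loop of length `n > 0` in `E`: edges `e_0, …, e_{n-1}` with
`r(e_{i+1}) = s(e_i)` and `r(e_0) = s(e_{n-1})`. -/
def DirGraph.IsLoop (Γ : DirGraph) (e : ℕ → Γ.E) (n : ℕ) : Prop :=
  0 < n ∧ (∀ i, i + 1 < n → Γ.r (e (i + 1)) = Γ.s (e i)) ∧ Γ.r (e 0) = Γ.s (e (n - 1))

/-- The loop `e_0, …, e_{n-1}` has an exit: some vertex `r(e_i)` on the loop
receives an edge different from `e_i`. -/
def DirGraph.LoopHasExit (Γ : DirGraph) (e : ℕ → Γ.E) (n : ℕ) : Prop :=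
  ∃ i < n, ∃ f : Γ.E, Γ.r f = Γ.r (e i) ∧ f ≠ e i

/-!
If a loop has no exit, the only infinite path received at a vertex of the loop runs around the
loop forever, so it is periodic. Conversely, if every loop has an exit, an aperiodic path is built
by diagonalisation over all pairs `(m, p)`: a path that is `p`-periodic from some point on runs
around a loop, and leaving that loop through an exit destroys the `p`-periodicity beyond `m`
without changing any given initial segment. The limit of these finite modifications is aperiodic.
-/

theorem exists_forall_eq_of_eq_succ {α : Type*} {x : ℕ → ℕ → α} {L : ℕ → ℕ}
    (hL : StrictMono L) (hx : ∀ t, ∀ j < L t, x (t + 1) j = x t j) :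
    ∃ z : ℕ → α, ∀ t, ∀ j < L t, z j = x t j := by
  have hstable : ∀ s t, s ≤ t → ∀ j < L s, x t j = x s j := by
    intro s t hst j hj
    induction t, hst using Nat.le_induction with
    | base => rfl
    | succ t hst ih => rw [hx t j (hj.trans_le (hL.monotone hst)), ih]
  refine ⟨fun j => x (j + 1) j, fun t j hj => ?_⟩
  rcases le_total t (j + 1) with h | h
  · exact hstable t (j + 1) h j hj
  · exact (hstable (j + 1) t h j ((Nat.lt_succ_self j).trans_le hL.le_apply)).symm

namespace DirGraph

variable {Γ : DirGraph}

theorem exists_isInfPath_head (hnosink : ∀ v : Γ.V, {f : Γ.E | Γ.r f = v}.Nonempty)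
    (f : Γ.E) : ∃ x : ℕ → Γ.E, Γ.IsInfPath x ∧ x 0 = f := by
  choose g hg using hnosink
  have hg' : ∀ v, Γ.r (g v) = v := hg
  exact ⟨fun n => Nat.rec (motive := fun _ => Γ.E) f (fun _ e => g (Γ.s e)) n,
    fun _ => hg' _, rfl⟩

theorem IsInfPath.exists_redirect (hnosink : ∀ v : Γ.V, {f : Γ.E | Γ.r f = v}.Nonempty)
    {x : ℕ → Γ.E} (hx : Γ.IsInfPath x) (q : ℕ) {f : Γ.E} (hf : Γ.r f = Γ.s (x q)) :
    ∃ y : ℕ → Γ.E, Γ.IsInfPath y ∧ (∀ j ≤ q, y j = x j) ∧ y (q + 1) = f := by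
  obtain ⟨z, hz, hz0⟩ := exists_isInfPath_head hnosink f
  refine ⟨fun j => if j ≤ q then x j else z (j - (q + 1)), fun n => ?_,
    fun j hj => if_pos hj, by simp [hz0]⟩
  rcases lt_trichotomy n q with hn | rfl | hn
  · simp only [if_pos (show n + 1 ≤ q by omega), if_pos hn.le]
    exact hx n
  · simp [hz0, hf]
  · simp only [if_neg (by omega : ¬n + 1 ≤ q), if_neg (by omega : ¬n ≤ q)]
    rw [show n + 1 - (q + 1) = n - (q + 1) + 1 by omega]
    exact hz _

theorem IsInfPath.isLoop_shift {x : ℕ → Γ.E} (hx : Γ.IsInfPath x) {N n : ℕ} (hn : 0 < n)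
    (hper : x N = x (N + n)) : Γ.IsLoop (fun i => x (N + i)) n := by
  refine ⟨hn, fun i _ => hx (N + i), ?_⟩
  show Γ.r (x (N + 0)) = Γ.s (x (N + (n - 1)))
  rw [add_zero, hper, show N + n = N + (n - 1) + 1 by omega]
  exact hx _

theorem IsLoop.isInfPath_mod {e : ℕ → Γ.E} {n : ℕ} (he : Γ.IsLoop e n) :
    Γ.IsInfPath fun j => e (j % n) := by
  obtain ⟨hn, hstep, hclose⟩ := he
  intro j
  show Γ.r (e ((j + 1) % n)) = Γ.s (e (j % n))
  have hj : j % n + 1 ≤ n := Nat.mod_lt j hn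
  rcases hj.lt_or_eq with hlt | heq
  · rw [show (j + 1) % n = j % n + 1 by
      rw [Nat.add_mod, Nat.mod_eq_of_lt (show 1 < n by omega), Nat.mod_eq_of_lt hlt]]
    exact hstep _ hlt
  · rw [show (j + 1) % n = 0 by rw [← Nat.mod_add_div j n, add_right_comm, heq]; simp,
      show j % n = n - 1 by omega]
    exact hclose

theorem IsInfPath.eq_of_unique_incoming {x y : ℕ → Γ.E} (hx : Γ.IsInfPath x)
    (hy : Γ.IsInfPath y) (h0 : Γ.r (x 0) = Γ.r (y 0))
    (hy_uniq : ∀ j f, Γ.r f = Γ.r (y j) → f = y j) : x = y := by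
  funext j
  induction j with
  | zero => exact hy_uniq 0 _ h0
  | succ j ih => exact hy_uniq (j + 1) _ (by rw [hx j, hy j, ih])

theorem IsLoop.loopHasExit_of_aperiodicPath {e : ℕ → Γ.E} {n : ℕ} (he : Γ.IsLoop e n)
    {x : ℕ → Γ.E} (hx : Γ.IsInfPath x) (hx0 : Γ.r (x 0) = Γ.r (e 0))
    (hap : Γ.AperiodicPath x) : Γ.LoopHasExit e n := by
  by_contra hnoexit
  have hxe : x = fun j => e (j % n) := by
    refine hx.eq_of_unique_incoming he.isInfPath_mod (by simpa using hx0) fun j f hf => ?_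
    by_contra hne
    exact hnoexit ⟨j % n, Nat.mod_lt j he.1, f, hf, hne⟩
  have hperiodic : (fun j => x (j + 0)) = fun j => x (j + n) := by
    funext j
    simp [hxe]
  exact he.1.ne (hap 0 n hperiodic)

theorem aperiodicPath_of_forall_exists_ne {x : ℕ → Γ.E}
    (h : ∀ m p, ∃ k, m ≤ k ∧ x k ≠ x (k + (p + 1))) : Γ.AperiodicPath x := by
  have key : ∀ m n, m < n → (fun j => x (j + m)) ≠ fun j => x (j + n) := by
    intro m n hmn hshift
    obtain ⟨k, hmk, hne⟩ := h m (n - m - 1)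
    have := congrFun hshift (k - m)
    rw [show k - m + m = k by omega, show k - m + n = k + (n - m - 1 + 1) by omega] at this
    exact hne this
  intro m n hshift
  rcases lt_trichotomy m n with hmn | rfl | hnm
  · exact absurd hshift (key m n hmn)
  · rfl
  · exact absurd hshift.symm (key n m hnm)

theorem IsInfPath.exists_break_period
    (hnosink : ∀ v : Γ.V, {f : Γ.E | Γ.r f = v}.Nonempty)
    (hexit : ∀ (e : ℕ → Γ.E) (n : ℕ), Γ.IsLoop e n → Γ.LoopHasExit e n)
    {x : ℕ → Γ.E} (hx : Γ.IsInfPath x) (N p : ℕ) :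
    ∃ y : ℕ → Γ.E, Γ.IsInfPath y ∧ (∀ j < N, y j = x j) ∧
      ∃ k, N ≤ k ∧ y k ≠ y (k + (p + 1)) := by
  by_cases hx_ne : ∃ k, N ≤ k ∧ x k ≠ x (k + (p + 1))
  · exact ⟨x, hx, fun _ _ => rfl, hx_ne⟩
  push Not at hx_ne
  obtain ⟨i, hi, f, hf, hfne⟩ :=
    hexit _ _ (hx.isLoop_shift (Nat.succ_pos p) (hx_ne N le_rfl))
  simp only at hf hfne
  have hf' : Γ.r f = Γ.s (x (N + i + p)) := by
    rw [hf, hx_ne (N + i) (by omega), ← add_assoc]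
    exact hx _
  obtain ⟨y, hy, hyx, hyf⟩ := hx.exists_redirect hnosink (N + i + p) hf'
  refine ⟨y, hy, fun j hj => hyx j (by omega), N + i, by omega, ?_⟩
  rw [hyx (N + i) (by omega), ← add_assoc, hyf]
  exact fun h => hfne h.symm

theorem exists_isInfPath_aperiodicPath
    (hnosink : ∀ v : Γ.V, {f : Γ.E | Γ.r f = v}.Nonempty)
    (hexit : ∀ (e : ℕ → Γ.E) (n : ℕ), Γ.IsLoop e n → Γ.LoopHasExit e n) (v : Γ.V) :
    ∃ x : ℕ → Γ.E, Γ.IsInfPath x ∧ Γ.r (x 0) = v ∧ Γ.AperiodicPath x := by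
  obtain ⟨f, hf⟩ := hnosink v
  obtain ⟨x₀, hx₀, hx₀f⟩ := exists_isInfPath_head hnosink f
  -- A stage `(x, L)` is a path `x` whose segment `[0, L)` is final; stage `t + 1` breaks the
  -- `(p + 1)`-periodicity beyond `m` for `(m, p) = Nat.unpair t`, which enumerates all pairs.
  have step : ∀ (s : {x // Γ.IsInfPath x} × ℕ) (t : ℕ),
      ∃ s' : {x // Γ.IsInfPath x} × ℕ,
      s.2 < s'.2 ∧ (∀ j < s.2, s'.1.1 j = s.1.1 j) ∧ ∃ k, (Nat.unpair t).1 ≤ k ∧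
        k + ((Nat.unpair t).2 + 1) < s'.2 ∧
        s'.1.1 k ≠ s'.1.1 (k + ((Nat.unpair t).2 + 1)) := by
    rintro ⟨⟨x, hx⟩, L⟩ t
    obtain ⟨y, hy, hyx, k, hk, hne⟩ :=
      hx.exists_break_period hnosink hexit (max L (Nat.unpair t).1) (Nat.unpair t).2
    exact ⟨(⟨y, hy⟩, k + ((Nat.unpair t).2 + 1) + 1), by omega,
      fun j hj => hyx j (by omega), k, by omega, by omega, hne⟩
  choose next hlen hagree hwitness using step
  let stage : ℕ → {x // Γ.IsInfPath x} × ℕ := fun t =>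
    Nat.rec (⟨x₀, hx₀⟩, 1) (fun t s => next s t) t
  have hmono : StrictMono fun t => (stage t).2 := strictMono_nat_of_lt_succ fun t => hlen _ _
  obtain ⟨z, hz⟩ := exists_forall_eq_of_eq_succ (x := fun t => (stage t).1.1) hmono
    fun t => hagree _ _
  have hlen_ge : ∀ t, t < (stage (t + 1)).2 := fun t => hmono.le_apply.trans_lt (hlen _ _)
  refine ⟨z, fun n => ?_, ?_, aperiodicPath_of_forall_exists_ne fun m p => ?_⟩
  · have hn : n + 1 < (stage (n + 2)).2 := hlen_ge (n + 1)
    rw [hz (n + 2) (n + 1) hn, hz (n + 2) n (by omega)]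
    exact (stage (n + 2)).1.2 n
  · rw [hz 0 0 (by simp [stage]), ← hf]
    exact congrArg Γ.r hx₀f
  · have hw := hwitness (stage (Nat.pair m p)) (Nat.pair m p)
    rw [Nat.unpair_pair] at hw
    obtain ⟨k, hmk, hkL, hne⟩ := hw
    change k + (p + 1) < (stage (Nat.pair m p + 1)).2 at hkL
    refine ⟨k, hmk, ?_⟩
    rwa [hz (Nat.pair m p + 1) k (by omega), hz (Nat.pair m p + 1) _ hkL]

end DirGraph

theorem aperiodicity_iff_loops_have_exits_general (Γ : DirGraph)
    (hnosink : ∀ v : Γ.V, {f : Γ.E | Γ.r f = v}.Nonempty) :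
    (∀ v : Γ.V, ∃ x : ℕ → Γ.E, Γ.IsInfPath x ∧ Γ.r (x 0) = v ∧ Γ.AperiodicPath x) ↔
      (∀ (e : ℕ → Γ.E) (n : ℕ), Γ.IsLoop e n → Γ.LoopHasExit e n) := by
  refine ⟨fun hap e n he => ?_, fun hexit => Γ.exists_isInfPath_aperiodicPath hnosink hexit⟩
  obtain ⟨x, hx, hx0, hxap⟩ := hap (Γ.r (e 0))
  exact he.loopHasExit_of_aperiodicPath hx hx0 hxap

/-- For a row-finite directed graph with no sinks, the path category `E*`
satisfies the aperiodicity condition (every vertex receives an aperiodic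
infinite path) if and only if every loop in `E` has an exit. -/
theorem aperiodicity_iff_loops_have_exits (Γ : DirGraph) [Countable Γ.V] [Countable Γ.E]
    (hrowfin : ∀ v : Γ.V, {f : Γ.E | Γ.r f = v}.Finite)
    (hnosink : ∀ v : Γ.V, {f : Γ.E | Γ.r f = v}.Nonempty) :
    (∀ v : Γ.V, ∃ x : ℕ → Γ.E, Γ.IsInfPath x ∧ Γ.r (x 0) = v ∧ Γ.AperiodicPath x) ↔
      (∀ (e : ℕ → Γ.E) (n : ℕ), Γ.IsLoop e n → Γ.LoopHasExit e n) :=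
  aperiodicity_iff_loops_have_exits_general Γ hnosink
end
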